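/- For all matrix indices i, j with 1 ≤ i, j ≤ m, the entry c_{ij} of the Boolean product C = A×B equals 1 if and only if the nonterminal C_{i₁,j₁} c-derives the substring w_{i₂}^{j₂+2δ}, i.e. if and only if both C_{i₁,j₁} ⇒* w_{i₂}^{j₂+2δ} and S ⇒* w₁^{i₂−1} C_{i₁,j₁} w_{j₂+2δ+1}^{3d+6} hold in the grammar G. -/

import Mathlib

/- Formalization of (part of) the reduction of Boolean matrix multiplication
to context-free grammar parsing (Lee, "Fast context-free grammar parsing
requires fast Boolean matrix multiplication"). -/

namespace CFGBMM

/-- Nonterminals of the grammars of the reduction. -/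
inductive NT : Type where
  | S : NT                 -- start symbol
  | T : NT                 -- extra symbol of the CNF grammar G'
  | W : NT                 -- derives arbitrary nonempty substrings
  | Wl : ℕ → NT            -- `W_ℓ` of G'
  | X : ℕ → NT             -- `X_ℓ` of G'
  | A : ℕ → ℕ → NT         -- `A_{p,q}`
  | B : ℕ → ℕ → NT         -- `B_{p,q}`
  | C : ℕ → ℕ → NT         -- `C_{p,q}`
deriving DecidableEq

abbrev Sym : Type := Symbol ℕ NT

/-- `d = ⌈m^(1/3)⌉`. -/
noncomputable def dOf (m : ℕ) : ℕ := ⌈(m : ℝ) ^ ((1 : ℝ) / 3)⌉₊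

/-- The substring `w_ℓ ⋯ w_r` of the input string `w = w₁ ⋯ w_{3d+6}`
(in which `w_ℓ` is just the terminal `ℓ`), as a sentential form. -/
def seg (l r : ℕ) : List Sym := (List.range' l (r + 1 - l)).map Symbol.terminal

/-- W-rules of `G`:  `W → w_ℓ W | w_ℓ`  for `1 ≤ ℓ ≤ 3d+6`. -/
def WRules (d : ℕ) : Set (ContextFreeRule ℕ NT) :=
  {r | ∃ l, 1 ≤ l ∧ l ≤ 3 * d + 6 ∧
    (r = ⟨NT.W, [Symbol.terminal l, Symbol.nonterminal NT.W]⟩ ∨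
     r = ⟨NT.W, [Symbol.terminal l]⟩)}

/-- A-rules of `G`:  `A_{i₁,j₁} → w_{i₂} W w_{j₂+δ}`  for each nonzero entry
`a_{ij}` of `A` (here `i₁ = ⌊i/d⌋`, `i₂ = (i mod d) + 2`, `δ = d + 2`). -/
def ARules (m d : ℕ) (a : ℕ → ℕ → ℕ) : Set (ContextFreeRule ℕ NT) :=
  {r | ∃ i j, 1 ≤ i ∧ i ≤ m ∧ 1 ≤ j ∧ j ≤ m ∧ a i j = 1 ∧
    r = ⟨NT.A (i / d) (j / d),
      [Symbol.terminal (i % d + 2), Symbol.nonterminal NT.W,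
       Symbol.terminal (j % d + 2 + (d + 2))]⟩}

/-- B-rules of `G`:  `B_{i₁,j₁} → w_{i₂+1+δ} W w_{j₂+2δ}`  for each nonzero
entry `b_{ij}` of `B`. -/
def BRules (m d : ℕ) (b : ℕ → ℕ → ℕ) : Set (ContextFreeRule ℕ NT) :=
  {r | ∃ i j, 1 ≤ i ∧ i ≤ m ∧ 1 ≤ j ∧ j ≤ m ∧ b i j = 1 ∧
    r = ⟨NT.B (i / d) (j / d),
      [Symbol.terminal (i % d + 2 + 1 + (d + 2)), Symbol.nonterminal NT.W,
       Symbol.terminal (j % d + 2 + 2 * (d + 2))]⟩}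

/-- C-rules:  `C_{p,q} → A_{p,r} B_{r,q}`  for all `0 ≤ p, q, r ≤ d²`. -/
def CRules (d : ℕ) : Set (ContextFreeRule ℕ NT) :=
  {r | ∃ p q t, p ≤ d ^ 2 ∧ q ≤ d ^ 2 ∧ t ≤ d ^ 2 ∧
    r = ⟨NT.C p q, [Symbol.nonterminal (NT.A p t), Symbol.nonterminal (NT.B t q)]⟩}

/-- S-rules of `G`:  `S → W C_{p,q} W`  for all `0 ≤ p, q ≤ d²`. -/
def SRules (d : ℕ) : Set (ContextFreeRule ℕ NT) :=
  {r | ∃ p q, p ≤ d ^ 2 ∧ q ≤ d ^ 2 ∧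
    r = ⟨NT.S, [Symbol.nonterminal NT.W, Symbol.nonterminal (NT.C p q),
      Symbol.nonterminal NT.W]⟩}

/-- The production set of the grammar `G` of the reduction. -/
def RulesG (m d : ℕ) (a b : ℕ → ℕ → ℕ) : Set (ContextFreeRule ℕ NT) :=
  WRules d ∪ ARules m d a ∪ BRules m d b ∪ CRules d ∪ SRules d

/-- One rewriting step using some rule from the rule set `R`. -/
def Produces (R : Set (ContextFreeRule ℕ NT)) (u v : List Sym) : Prop :=
  ∃ r ∈ R, r.Rewrites u v

/-- The usual context-free derivation relation `⇒*` for the rule set `R`. -/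
def Derives (R : Set (ContextFreeRule ℕ NT)) : List Sym → List Sym → Prop :=
  Relation.ReflTransGen (Produces R)


/-! ### Auxiliary lemmas -/

lemma Derives.append_left {R : Set (ContextFreeRule ℕ NT)} {v w : List Sym}
    (h : Derives R v w) (p : List Sym) : Derives R (p ++ v) (p ++ w) := by
  induction h with
  | refl => exact Relation.ReflTransGen.refl
  | tail _ step ih =>
      obtain ⟨r, hr, hrw⟩ := step
      exact Relation.ReflTransGen.tail ih ⟨r, hr, hrw.append_left p⟩

lemma Derives.append_right {R : Set (ContextFreeRule ℕ NT)} {v w : List Sym}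
    (h : Derives R v w) (p : List Sym) : Derives R (v ++ p) (w ++ p) := by
  induction h with
  | refl => exact Relation.ReflTransGen.refl
  | tail _ step ih =>
      obtain ⟨r, hr, hrw⟩ := step
      exact Relation.ReflTransGen.tail ih ⟨r, hr, hrw.append_right p⟩

lemma Derives.append {R : Set (ContextFreeRule ℕ NT)} {u₁ u₂ w₁ w₂ : List Sym}
    (h₁ : Derives R u₁ w₁) (h₂ : Derives R u₂ w₂) :
    Derives R (u₁ ++ u₂) (w₁ ++ w₂) :=
  Relation.ReflTransGen.trans (h₁.append_right u₂) (h₂.append_left w₁)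

/-- Splitting a derivation from a concatenation. -/
lemma derives_split {R : Set (ContextFreeRule ℕ NT)} :
    ∀ {x w : List Sym}, Derives R x w → ∀ u v, x = u ++ v →
    ∃ w₁ w₂, w = w₁ ++ w₂ ∧ Derives R u w₁ ∧ Derives R v w₂ := by
  intro x w h
  induction h using Relation.ReflTransGen.head_induction_on with
  | refl => exact fun u v huv => ⟨u, v, huv, Relation.ReflTransGen.refl,
      Relation.ReflTransGen.refl⟩
  | head step _ ih =>
      rename_i x' y' _
      intro u v hx
      obtain ⟨r, hrR, hrw⟩ := step
      obtain ⟨p, q, heq, hy⟩ := hrw.exists_parts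
      rw [hx] at heq
      rcases le_or_gt u.length p.length with hle | hlt
      · -- nonterminal inside v
        have hup : u <+: p :=
          List.prefix_of_prefix_length_le ⟨v, heq⟩
            ⟨[Symbol.nonterminal r.input] ++ q, (List.append_assoc _ _ _).symm⟩ hle
        obtain ⟨p', rfl⟩ := hup
        have hv : v = p' ++ [Symbol.nonterminal r.input] ++ q := by
          refine List.append_cancel_left
            (?_ : u ++ v = u ++ (p' ++ [Symbol.nonterminal r.input] ++ q))
          rw [heq]; simp [List.append_assoc]
        have hy' : y' = u ++ (p' ++ r.output ++ q) := by
          rw [hy]; simp [List.append_assoc]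
        obtain ⟨w₁, w₂, hw, h1, h2⟩ := ih u (p' ++ r.output ++ q) hy'
        refine ⟨w₁, w₂, hw, h1, Relation.ReflTransGen.head ⟨r, hrR, ?_⟩ h2⟩
        rw [hv]; exact ContextFreeRule.rewrites_of_exists_parts r p' q
      · -- nonterminal inside u
        have hpu : p ++ [Symbol.nonterminal r.input] <+: u := by
          refine List.prefix_of_prefix_length_le ⟨q, heq.symm⟩ ⟨v, rfl⟩ ?_
          simp; omega
        obtain ⟨u', rfl⟩ := hpu
        have hq : q = u' ++ v := by
          refine List.append_cancel_left (?_ : (p ++ [Symbol.nonterminal r.input]) ++ q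
            = (p ++ [Symbol.nonterminal r.input]) ++ (u' ++ v))
          rw [← heq]; simp [List.append_assoc]
        have hy' : y' = (p ++ r.output ++ u') ++ v := by
          rw [hy, hq]; simp [List.append_assoc]
        obtain ⟨w₁, w₂, hw, h1, h2⟩ := ih (p ++ r.output ++ u') v hy'
        refine ⟨w₁, w₂, hw, Relation.ReflTransGen.head ⟨r, hrR, ?_⟩ h1, h2⟩
        exact ContextFreeRule.rewrites_of_exists_parts r p u'

/-- A string of terminals derives only itself. -/
lemma derives_terminals {R : Set (ContextFreeRule ℕ NT)} {u v : List Sym}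
    (h : Derives R u v) (hu : ∀ s ∈ u, ∃ t, s = Symbol.terminal t) : v = u := by
  rcases Relation.ReflTransGen.cases_head h with h | ⟨x, ⟨r, _, hrw⟩, _⟩
  · exact h.symm
  · exfalso
    obtain ⟨p, q, heq, _⟩ := hrw.exists_parts
    obtain ⟨t, ht⟩ := hu (Symbol.nonterminal r.input) (by rw [heq]; simp)
    cases ht

/-- Inversion of the first step of a derivation from a single nonterminal. -/
lemma derives_nt {R : Set (ContextFreeRule ℕ NT)} {N : NT} {w : List Sym}
    (h : Derives R [Symbol.nonterminal N] w) (hw : w ≠ [Symbol.nonterminal N]) :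
    ∃ r ∈ R, r.input = N ∧ Derives R r.output w := by
  rcases Relation.ReflTransGen.cases_head h with h | ⟨x, ⟨r, hrR, hrw⟩, hder⟩
  · exact absurd h.symm hw
  · obtain ⟨p, q, heq, hx⟩ := hrw.exists_parts
    have hlen := congrArg List.length heq
    simp at hlen
    have hp : p = [] := List.length_eq_zero_iff.mp (by omega)
    have hq : q = [] := List.length_eq_zero_iff.mp (by omega)
    subst hp; subst hq
    simp at heq hx
    exact ⟨r, hrR, heq.symm, hx ▸ hder⟩

lemma seg_length (l r : ℕ) : (seg l r).length = r + 1 - l := by simp [seg]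

lemma seg_terminals {l r : ℕ} : ∀ s ∈ seg l r, ∃ t, s = Symbol.terminal t := by
  simp only [seg, List.mem_map]
  rintro s ⟨t, -, rfl⟩
  exact ⟨t, rfl⟩

lemma seg_single (l : ℕ) : seg l l = [Symbol.terminal l] := by
  simp [seg]

lemma seg_cons {l r : ℕ} (h : l ≤ r) :
    seg l r = Symbol.terminal l :: seg (l + 1) r := by
  obtain ⟨n, rfl⟩ : ∃ n, r = l + n := ⟨r - l, by omega⟩
  have h1 : l + n + 1 - l = n + 1 := by omega
  have h2 : l + n + 1 - (l + 1) = n := by omega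
  simp [seg, h1, h2, List.range'_succ]

lemma seg_append {l k r : ℕ} (h1 : l ≤ k + 1) (h2 : k ≤ r) :
    seg l k ++ seg (k + 1) r = seg l r := by
  simp only [seg, ← List.map_append]
  congr 1
  have e1 : (k + 1 - l) + (r + 1 - (k + 1)) = r + 1 - l := by omega
  have e2 : l + (k + 1 - l) = k + 1 := by omega
  rw [← e1, ← List.range'_append_1, e2]

lemma seg_decomp {l r : ℕ} (h : l + 2 ≤ r) :
    seg l r = [Symbol.terminal l] ++ seg (l + 1) (r - 1) ++ [Symbol.terminal r] := by
  have e1 : seg l r = seg l l ++ seg (l + 1) r := by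
    rw [seg_append (by omega) (by omega)]
  have e2 : seg (l + 1) r = seg (l + 1) (r - 1) ++ seg (r - 1 + 1) r := by
    rw [seg_append (by omega) (by omega)]
  have e3 : r - 1 + 1 = r := by omega
  rw [e1, e2, e3, seg_single, seg_single, List.append_assoc]

/-- Reading off an entry of `seg` from a decomposition. -/
lemma seg_entry {L R : ℕ} {l r : List Sym} {s : Sym}
    (hE : seg L R = l ++ s :: r) : s = Symbol.terminal (L + l.length) := by
  have hlen := congrArg List.length hE
  simp [seg_length] at hlen
  have h1 : (seg L R)[l.length]? = some s := by
    rw [hE, List.getElem?_append_right le_rfl]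
    simp
  have h2 : (seg L R)[l.length]? = some (Symbol.terminal (L + l.length)) := by
    simp only [seg, List.getElem?_map]
    rw [List.getElem?_range' (by omega)]
    simp
  rw [h1] at h2
  exact Option.some.inj h2

/-- `W` derives any nonempty segment with labels in `[1, 3d+6]`. -/
lemma W_derives_seg (m d : ℕ) (a b : ℕ → ℕ → ℕ) :
    ∀ (n l : ℕ), 1 ≤ l → l + n ≤ 3 * d + 6 →
    Derives (RulesG m d a b) [Symbol.nonterminal NT.W] (seg l (l + n)) := by
  intro n
  induction n with
  | zero =>
      intro l h1 h2
      refine Relation.ReflTransGen.single ⟨⟨NT.W, [Symbol.terminal l]⟩, ?_, ?_⟩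
      · exact Or.inl (Or.inl (Or.inl (Or.inl ⟨l, h1, by omega, Or.inr rfl⟩)))
      · simpa [seg_single] using
          (ContextFreeRule.Rewrites.input_output
            (r := ⟨NT.W, [Symbol.terminal l]⟩))
  | succ n ih =>
      intro l h1 h2
      have step : Produces (RulesG m d a b) [Symbol.nonterminal NT.W]
          [Symbol.terminal l, Symbol.nonterminal NT.W] := by
        refine ⟨⟨NT.W, [Symbol.terminal l, Symbol.nonterminal NT.W]⟩, ?_, ?_⟩
        · exact Or.inl (Or.inl (Or.inl (Or.inl ⟨l, h1, by omega, Or.inl rfl⟩)))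
        · exact ContextFreeRule.Rewrites.input_output
            (r := ⟨NT.W, [Symbol.terminal l, Symbol.nonterminal NT.W]⟩)
      have tail : Derives (RulesG m d a b) [Symbol.nonterminal NT.W]
          (seg (l + 1) (l + 1 + n)) := ih (l + 1) (by omega) (by omega)
      have : Derives (RulesG m d a b)
          ([Symbol.terminal l] ++ [Symbol.nonterminal NT.W])
          ([Symbol.terminal l] ++ seg (l + 1) (l + 1 + n)) :=
        tail.append_left _
      refine Relation.ReflTransGen.head step ?_
      have e : seg l (l + (n + 1)) =
          [Symbol.terminal l] ++ seg (l + 1) (l + 1 + n) := by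
        rw [seg_cons (by omega)]
        have : l + (n + 1) = l + 1 + n := by omega
        rw [this]
        rfl
      rw [e]
      exact this

lemma W_derives_seg' {m d : ℕ} {a b : ℕ → ℕ → ℕ} {l r : ℕ}
    (h1 : 1 ≤ l) (h2 : l ≤ r) (h3 : r ≤ 3 * d + 6) :
    Derives (RulesG m d a b) [Symbol.nonterminal NT.W] (seg l r) := by
  obtain ⟨n, rfl⟩ : ∃ n, r = l + n := ⟨r - l, by omega⟩
  exact W_derives_seg m d a b n l h1 h3

/-- **Theorem 1 of the paper.** For `1 ≤ i, j ≤ m`, the entry `c_{ij}` of the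
Boolean product `C = A × B` is `1` (i.e. there is `k` with `1 ≤ k ≤ m` and
`a_{ik} = b_{kj} = 1`) iff the nonterminal `C_{i₁,j₁}` c-derives
`w_{i₂}^{j₂+2δ}`, i.e. both `C_{i₁,j₁} ⇒* w_{i₂}^{j₂+2δ}` and
`S ⇒* w₁^{i₂−1} C_{i₁,j₁} w_{j₂+2δ+1}^{3d+6}` hold in `G`. -/
theorem bmm_entry_iff_cderives
    (m : ℕ) (hm : 1 ≤ m) (a b : ℕ → ℕ → ℕ)
    (ha : ∀ i j, a i j = 0 ∨ a i j = 1) (hb : ∀ i j, b i j = 0 ∨ b i j = 1)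
    (d δ : ℕ) (hd : d = dOf m) (hδ : δ = d + 2)
    (i j : ℕ) (hi1 : 1 ≤ i) (him : i ≤ m) (hj1 : 1 ≤ j) (hjm : j ≤ m) :
    (∃ k, 1 ≤ k ∧ k ≤ m ∧ a i k = 1 ∧ b k j = 1) ↔
      (Derives (RulesG m d a b) [Symbol.nonterminal (NT.C (i / d) (j / d))]
          (seg (i % d + 2) (j % d + 2 + 2 * δ)) ∧
       Derives (RulesG m d a b) [Symbol.nonterminal NT.S]
          (seg 1 (i % d + 2 - 1) ++ [Symbol.nonterminal (NT.C (i / d) (j / d))] ++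
            seg (j % d + 2 + 2 * δ + 1) (3 * d + 6))) := by
  subst hδ
  have hd1 : 1 ≤ d := by
    rw [hd, dOf, Nat.one_le_ceil_iff]
    have h0 : (0:ℝ) < (m:ℝ) := by exact_mod_cast hm
    positivity
  have hm3 : m ≤ d ^ 3 := by
    have h1 : (m:ℝ) ^ ((1:ℝ)/3) ≤ (d:ℝ) := by rw [hd, dOf]; exact Nat.le_ceil _
    have hm0 : (0:ℝ) ≤ (m:ℝ) := by positivity
    have h2 : (m:ℝ) ≤ (d:ℝ) ^ (3:ℕ) := by
      calc (m:ℝ) = ((m:ℝ) ^ ((1:ℝ)/3)) ^ (3:ℕ) := by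
            rw [← Real.rpow_natCast ((m:ℝ) ^ ((1:ℝ)/3)) 3, ← Real.rpow_mul hm0]
            norm_num
        _ ≤ (d:ℝ) ^ (3:ℕ) := pow_le_pow_left₀ (Real.rpow_nonneg hm0 _) h1 3
    exact_mod_cast h2
  have hdiv : ∀ x, x ≤ m → x / d ≤ d ^ 2 := by
    intro x hx
    have h1 : x / d ≤ d ^ 3 / d := Nat.div_le_div_right (hx.trans hm3)
    have h2 : d ^ 3 / d = d ^ 2 := by
      rw [pow_succ]
      exact Nat.mul_div_cancel _ hd1
    omega
  have himod : i % d < d := Nat.mod_lt _ hd1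
  have hjmod : j % d < d := Nat.mod_lt _ hd1
  constructor
  · rintro ⟨k, hk1, hkm, hak, hbk⟩
    have hkmod : k % d < d := Nat.mod_lt _ hd1
    have hA : Derives (RulesG m d a b)
        [Symbol.nonterminal (NT.A (i / d) (k / d))]
        (seg (i % d + 2) (k % d + 2 + (d + 2))) := by
      refine Relation.ReflTransGen.head
        ⟨⟨NT.A (i / d) (k / d),
          [Symbol.terminal (i % d + 2), Symbol.nonterminal NT.W,
           Symbol.terminal (k % d + 2 + (d + 2))]⟩,
         Or.inl (Or.inl (Or.inl (Or.inr ⟨i, k, hi1, him, hk1, hkm, hak, rfl⟩))),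
         ContextFreeRule.Rewrites.input_output⟩ ?_
      rw [seg_decomp (by omega)]
      have hw : Derives (RulesG m d a b) [Symbol.nonterminal NT.W]
          (seg (i % d + 2 + 1) (k % d + 2 + (d + 2) - 1)) :=
        W_derives_seg' (by omega) (by omega) (by omega)
      exact (hw.append_left [Symbol.terminal (i % d + 2)]).append
        (Relation.ReflTransGen.refl)
    have hB : Derives (RulesG m d a b)
        [Symbol.nonterminal (NT.B (k / d) (j / d))]
        (seg (k % d + 2 + (d + 2) + 1) (j % d + 2 + 2 * (d + 2))) := by
      refine Relation.ReflTransGen.head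
        ⟨⟨NT.B (k / d) (j / d),
          [Symbol.terminal (k % d + 2 + 1 + (d + 2)), Symbol.nonterminal NT.W,
           Symbol.terminal (j % d + 2 + 2 * (d + 2))]⟩,
         Or.inl (Or.inl (Or.inr ⟨k, j, hk1, hkm, hj1, hjm, hbk, rfl⟩)),
         ContextFreeRule.Rewrites.input_output⟩ ?_
      rw [show k % d + 2 + (d + 2) + 1 = k % d + 2 + 1 + (d + 2) from by omega]
      rw [seg_decomp (by omega)]
      have hw : Derives (RulesG m d a b) [Symbol.nonterminal NT.W]
          (seg (k % d + 2 + 1 + (d + 2) + 1) (j % d + 2 + 2 * (d + 2) - 1)) :=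
        W_derives_seg' (by omega) (by omega) (by omega)
      exact (hw.append_left [Symbol.terminal (k % d + 2 + 1 + (d + 2))]).append
        (Relation.ReflTransGen.refl)
    have hC : Derives (RulesG m d a b)
        [Symbol.nonterminal (NT.C (i / d) (j / d))]
        (seg (i % d + 2) (j % d + 2 + 2 * (d + 2))) := by
      refine Relation.ReflTransGen.head
        ⟨⟨NT.C (i / d) (j / d),
          [Symbol.nonterminal (NT.A (i / d) (k / d)),
           Symbol.nonterminal (NT.B (k / d) (j / d))]⟩,
         Or.inl (Or.inr ⟨i / d, j / d, k / d, hdiv i him, hdiv j hjm, hdiv k hkm, rfl⟩),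
         ContextFreeRule.Rewrites.input_output⟩ ?_
      have h2 := hA.append hB
      rw [seg_append (by omega) (by omega)] at h2
      exact h2
    refine ⟨hC, ?_⟩
    refine Relation.ReflTransGen.head
      ⟨⟨NT.S, [Symbol.nonterminal NT.W,
        Symbol.nonterminal (NT.C (i / d) (j / d)), Symbol.nonterminal NT.W]⟩,
       Or.inr ⟨i / d, j / d, hdiv i him, hdiv j hjm, rfl⟩,
       ContextFreeRule.Rewrites.input_output⟩ ?_
    have hw1 : Derives (RulesG m d a b) [Symbol.nonterminal NT.W]
        (seg 1 (i % d + 2 - 1)) := W_derives_seg' (by omega) (by omega) (by omega)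
    have hw2 : Derives (RulesG m d a b) [Symbol.nonterminal NT.W]
        (seg (j % d + 2 + 2 * (d + 2) + 1) (3 * d + 6)) :=
      W_derives_seg' (by omega) (by omega) (by omega)
    exact (hw1.append (Relation.ReflTransGen.refl
      (a := [Symbol.nonterminal (NT.C (i / d) (j / d))]))).append hw2
  · rintro ⟨hC, -⟩
    have hnontc : ∀ (N : NT) (x y : List Sym),
        seg (i % d + 2) (j % d + 2 + 2 * (d + 2)) = x ++ Symbol.nonterminal N :: y →
        False := by
      intro N x y hE
      have h2 := seg_entry hE
      cases h2
    obtain ⟨r1, hr1R, hr1in, hr1der⟩ := derives_nt hC (by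
      intro hEq; exact hnontc _ [] [] hEq)
    simp only [RulesG, Set.mem_union] at hr1R
    rcases hr1R with ((((hW1 | hA1) | hB1) | hC1) | hS1)
    · obtain ⟨l, -, -, h | h⟩ := hW1 <;> subst h <;> simp at hr1in
    · obtain ⟨i', j', -, -, -, -, -, h⟩ := hA1; subst h; simp at hr1in
    · obtain ⟨i', j', -, -, -, -, -, h⟩ := hB1; subst h; simp at hr1in
    · obtain ⟨p', q', t, hp2, hq2, ht2, h⟩ := hC1
      subst h
      simp only [NT.C.injEq] at hr1in
      obtain ⟨rfl, rfl⟩ := hr1in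
      obtain ⟨u, v, huv, hu, hv⟩ := derives_split hr1der
        [Symbol.nonterminal (NT.A (i / d) t)]
        [Symbol.nonterminal (NT.B t (j / d))] rfl
      obtain ⟨r2, hr2R, hr2in, hr2der⟩ := derives_nt hu (by
        intro hEq; rw [hEq] at huv; exact hnontc _ [] v huv)
      obtain ⟨r3, hr3R, hr3in, hr3der⟩ := derives_nt hv (by
        intro hEq; rw [hEq] at huv; exact hnontc _ u [] huv)
      simp only [RulesG, Set.mem_union] at hr2R hr3R
      rcases hr2R with ((((hW2 | hA2) | hB2) | hC2) | hS2)
      · obtain ⟨l, -, -, h | h⟩ := hW2 <;> subst h <;> simp at hr2in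
      · obtain ⟨i', k', hi'1, hi'm, hk'1, hk'm, hai', h⟩ := hA2
        subst h
        simp only [NT.A.injEq] at hr2in
        obtain ⟨hpi, hkt⟩ := hr2in
        rcases hr3R with ((((hW3 | hA3) | hB3) | hC3) | hS3)
        · obtain ⟨l, -, -, h | h⟩ := hW3 <;> subst h <;> simp at hr3in
        · obtain ⟨i'', j'', -, -, -, -, -, h⟩ := hA3; subst h; simp at hr3in
        · obtain ⟨k'', j'', hk''1, hk''m, hj''1, hj''m, hbkj, h⟩ := hB3
          subst h
          simp only [NT.B.injEq] at hr3in
          obtain ⟨hkt'', hqj⟩ := hr3in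
          -- decompose u
          obtain ⟨s1, s23, hu1, hs1, hs23⟩ := derives_split hr2der
            [Symbol.terminal (i' % d + 2)]
            [Symbol.nonterminal NT.W, Symbol.terminal (k' % d + 2 + (d + 2))] rfl
          have hs1' : s1 = [Symbol.terminal (i' % d + 2)] :=
            derives_terminals hs1 (by
              rintro s hs; rw [List.mem_singleton] at hs; exact ⟨_, hs⟩)
          obtain ⟨s2, s3, hs23e, hsW, hs3⟩ := derives_split hs23
            [Symbol.nonterminal NT.W] [Symbol.terminal (k' % d + 2 + (d + 2))] rfl
          have hs3' : s3 = [Symbol.terminal (k' % d + 2 + (d + 2))] :=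
            derives_terminals hs3 (by
              rintro s hs; rw [List.mem_singleton] at hs; exact ⟨_, hs⟩)
          -- decompose v
          obtain ⟨s1', s23', hv1, hs1b, hs23b⟩ := derives_split hr3der
            [Symbol.terminal (k'' % d + 2 + 1 + (d + 2))]
            [Symbol.nonterminal NT.W,
             Symbol.terminal (j'' % d + 2 + 2 * (d + 2))] rfl
          have hs1b' : s1' = [Symbol.terminal (k'' % d + 2 + 1 + (d + 2))] :=
            derives_terminals hs1b (by
              rintro s hs; rw [List.mem_singleton] at hs; exact ⟨_, hs⟩)
          obtain ⟨s2', s3', hs23e', hsW', hs3b⟩ := derives_split hs23b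
            [Symbol.nonterminal NT.W]
            [Symbol.terminal (j'' % d + 2 + 2 * (d + 2))] rfl
          have hs3b' : s3' = [Symbol.terminal (j'' % d + 2 + 2 * (d + 2))] :=
            derives_terminals hs3b (by
              rintro s hs; rw [List.mem_singleton] at hs; exact ⟨_, hs⟩)
          have hwhole : seg (i % d + 2) (j % d + 2 + 2 * (d + 2)) =
              Symbol.terminal (i' % d + 2) ::
                (s2 ++ Symbol.terminal (k' % d + 2 + (d + 2)) ::
                  Symbol.terminal (k'' % d + 2 + 1 + (d + 2)) ::
                    (s2' ++ [Symbol.terminal (j'' % d + 2 + 2 * (d + 2))])) := by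
            rw [huv, hu1, hs1', hs23e, hs3', hv1, hs1b', hs23e', hs3b']
            simp
          have e0 := seg_entry (l := ([] : List Sym))
            (s := Symbol.terminal (i' % d + 2))
            (r := s2 ++ Symbol.terminal (k' % d + 2 + (d + 2)) ::
              Symbol.terminal (k'' % d + 2 + 1 + (d + 2)) ::
                (s2' ++ [Symbol.terminal (j'' % d + 2 + 2 * (d + 2))]))
            (by rw [hwhole]; simp)
          have e1 := seg_entry (l := Symbol.terminal (i' % d + 2) :: s2)
            (s := Symbol.terminal (k' % d + 2 + (d + 2)))
            (r := Symbol.terminal (k'' % d + 2 + 1 + (d + 2)) ::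
              (s2' ++ [Symbol.terminal (j'' % d + 2 + 2 * (d + 2))]))
            (by rw [hwhole]; simp)
          have e2 := seg_entry
            (l := Symbol.terminal (i' % d + 2) ::
              (s2 ++ [Symbol.terminal (k' % d + 2 + (d + 2))]))
            (s := Symbol.terminal (k'' % d + 2 + 1 + (d + 2)))
            (r := s2' ++ [Symbol.terminal (j'' % d + 2 + 2 * (d + 2))])
            (by rw [hwhole]; simp)
          have e3 := seg_entry
            (l := Symbol.terminal (i' % d + 2) ::
              (s2 ++ Symbol.terminal (k' % d + 2 + (d + 2)) ::
                Symbol.terminal (k'' % d + 2 + 1 + (d + 2)) :: s2'))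
            (s := Symbol.terminal (j'' % d + 2 + 2 * (d + 2)))
            (r := ([] : List Sym))
            (by rw [hwhole]; simp)
          have hlenw := congrArg List.length hwhole
          simp only [seg_length, List.length_cons, List.length_append,
            List.length_nil] at hlenw
          simp only [List.length_cons, List.length_append, List.length_nil,
            Symbol.terminal.injEq] at e0 e1 e2 e3
          -- recover the indices
          have hi'mod : i' % d = i % d := by omega
          have hk''mod : k'' % d = k' % d := by omega
          have hj''mod : j'' % d = j % d := by omega
          have hieq : i' = i := by
            have h1 := Nat.div_add_mod i d
            have h2 := Nat.div_add_mod i' d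
            rw [hpi, hi'mod] at h2
            exact h2.symm.trans h1
          have hkeq : k'' = k' := by
            have h1 := Nat.div_add_mod k' d
            have h2 := Nat.div_add_mod k'' d
            rw [hkt'', ← hkt, hk''mod] at h2
            exact h2.symm.trans h1
          have hjeq : j'' = j := by
            have h1 := Nat.div_add_mod j d
            have h2 := Nat.div_add_mod j'' d
            rw [hqj, hj''mod] at h2
            exact h2.symm.trans h1
          rw [hieq] at hai'
          rw [hkeq, hjeq] at hbkj
          rw [hkeq] at hk''1 hk''m
          exact ⟨k', hk''1, hk''m, hai', hbkj⟩
        · obtain ⟨p', q', t', -, -, -, h⟩ := hC3; subst h; simp at hr3in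
        · obtain ⟨p'', q'', -, -, h⟩ := hS3; subst h; simp at hr3in
      · obtain ⟨i', j', -, -, -, -, -, h⟩ := hB2; subst h; simp at hr2in
      · obtain ⟨p', q', t', -, -, -, h⟩ := hC2; subst h; simp at hr2in
      · obtain ⟨p'', q'', -, -, h⟩ := hS2; subst h; simp at hr2in
    · obtain ⟨p', q', -, -, h⟩ := hS1; subst h; simp at hr1in

end CFGBMM
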